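/- Let I be a set. The category T_I of finitary I-trees and embeddings has pullbacks (given by intersections of sub-trees), and for every pullback square X∩Y → X → Z, X∩Y → Y → Z in T_I and every pair of embeddings u, v : Z ⇉ A whose restrictions to X∩Y agree, there exists an embedding w : Z → A whose restriction to X agrees with that of u and whose restriction to Y agrees with that of v. In particular, T_I satisfies condition (C2'). -/

import Mathlib

open CategoryTheory Limits Opposite

/-- A full binary tree: a type with a root and a child relation such that every node
has exactly zero or two children and every node is reached from the root by a unique
path. -/
structure BinTree : Type 1 where
  carrier : Type
  root : carrier
  child : carrier → carrier → Prop
  children_empty_or_pair : ∀ x : carrier,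
    {y | child x y} = (∅ : Set carrier) ∨
    ∃ a b : carrier, a ≠ b ∧ {y | child x y} = {a, b}
  unique_path : ∀ y : carrier, ∃! l : List carrier,
    l.Chain' child ∧ l.head? = some root ∧ l.getLast? = some y

namespace BinTree

/-- `f` is a branch of `T`: an infinite sequence starting at the root and following the
child relation. -/
def IsBranch (T : BinTree) (f : ℕ → T.carrier) : Prop :=
  f 0 = T.root ∧ ∀ n, T.child (f n) (f (n + 1))

/-- The type of branches of `T`. -/
def Branch (T : BinTree) : Type := {f : ℕ → T.carrier // T.IsBranch f}

/-- A node lies on a branch. -/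
def OnBranch (T : BinTree) (x : T.carrier) : Prop :=
  ∃ (b : T.Branch) (n : ℕ), b.1 n = x

end BinTree

/-- An `I`-tree: a full binary tree together with a partial labeling of its branches
by elements of `I`. -/
structure ITree (I : Type) extends BinTree where
  label : toBinTree.Branch → Option I

namespace ITree

variable {I : Type}

/-- An embedding of `I`-trees: an injective map preserving the root, reflecting and
preserving the child relation, and preserving the labels of branches. -/
structure Emb (X Y : ITree I) where
  toFun : X.carrier → Y.carrier
  inj : Function.Injective toFun
  map_root : toFun X.root = Y.root
  map_child : ∀ a b : X.carrier, X.child a b ↔ Y.child (toFun a) (toFun b)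
  map_label : ∀ (b : X.toBinTree.Branch) (c : Y.toBinTree.Branch),
    (∀ n, c.1 n = toFun (b.1 n)) → ∀ i : I, X.label b = some i → Y.label c = some i

theorem Emb.ext' {X Y : ITree I} {f g : Emb X Y} (h : f.toFun = g.toFun) : f = g := by
  cases f; cases g; cases h; rfl

/-- The image of a branch under an embedding. -/
def Emb.mapBranch {X Y : ITree I} (f : Emb X Y) (b : X.toBinTree.Branch) :
    Y.toBinTree.Branch :=
  ⟨fun n => f.toFun (b.1 n), by
    constructor
    · show f.toFun (b.1 0) = Y.root
      rw [b.2.1, f.map_root]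
    · intro n
      exact (f.map_child _ _).1 (b.2.2 n)⟩

/-- The identity embedding. -/
def idEmb (X : ITree I) : Emb X X where
  toFun := id
  inj := fun a b h => h
  map_root := rfl
  map_child := fun _ _ => Iff.rfl
  map_label := by
    intro b c hbc i hi
    have : c = b := Subtype.ext (funext fun n => hbc n)
    rw [this]
    exact hi

/-- Composition of embeddings. -/
def compEmb {X Y Z : ITree I} (f : Emb X Y) (g : Emb Y Z) : Emb X Z where
  toFun := g.toFun ∘ f.toFun
  inj := g.inj.comp f.inj
  map_root := by
    show g.toFun (f.toFun X.root) = Z.root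
    rw [f.map_root, g.map_root]
  map_child := fun a b => (f.map_child a b).trans (g.map_child _ _)
  map_label := by
    intro b c hbc i hi
    exact g.map_label (f.mapBranch b) c (fun n => hbc n) i
      (f.map_label b (f.mapBranch b) (fun _ => rfl) i hi)

/-- An `I`-tree is finitary if it has finitely many branches, finitely many nodes whose
parent lies on no branch, and a total labeling function. -/
def Finitary (X : ITree I) : Prop :=
  Finite X.toBinTree.Branch ∧
  Finite {x : X.carrier | ¬ ∃ p, X.child p x ∧ X.toBinTree.OnBranch p} ∧
  ∀ b, (X.label b).isSome

end ITree

/-- The category of `I`-trees and embeddings. -/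
instance ITreeCat (I : Type) : Category (ITree I) where
  Hom := ITree.Emb
  id := ITree.idEmb
  comp := ITree.compEmb
  id_comp f := ITree.Emb.ext' rfl
  comp_id f := ITree.Emb.ext' rfl
  assoc f g h := ITree.Emb.ext' rfl

/-- The category `T_I` of finitary `I`-trees and embeddings. -/
abbrev FinITree (I : Type) : Type 1 := ObjectProperty.FullSubcategory (ITree.Finitary (I := I))

universe v u

/-- Condition (C2'): for every pullback square `X∩Y → X → Z`, `X∩Y → Y → Z` and every
pair `u, v : Z ⇉ A` agreeing on `X∩Y`, there are `w : A → A'` and a finite sequence of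
morphisms `Z → A'` from `u ≫ w` to `v ≫ w` in which consecutive morphisms agree on `X`
or on `Y`. -/
def CondC2' (C : Type u) [Category.{v} C] : Prop :=
  ∀ {W X Y Z : C} (fst : W ⟶ X) (snd : W ⟶ Y) (f : X ⟶ Z) (g : Y ⟶ Z),
    IsPullback fst snd f g →
    ∀ {A : C} (u v : Z ⟶ A), (fst ≫ f) ≫ u = (fst ≫ f) ≫ v →
      ∃ (A' : C) (w : A ⟶ A') (n : ℕ) (k : Fin (n + 1) → (Z ⟶ A')),
        k 0 = u ≫ w ∧ k (Fin.last n) = v ≫ w ∧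
        ∀ i : Fin n, f ≫ k i.castSucc = f ≫ k i.succ ∨ g ≫ k i.castSucc = g ≫ k i.succ

section PathLemmas

namespace BinTree

variable (T : BinTree)

/-- The predicate of being the root path to `y`. -/
def IsPath (l : List T.carrier) (y : T.carrier) : Prop :=
  l.Chain' T.child ∧ l.head? = some T.root ∧ l.getLast? = some y

noncomputable def pth (y : T.carrier) : List T.carrier := (T.unique_path y).choose

variable {T}

lemma pth_spec (y : T.carrier) : T.IsPath (T.pth y) y := (T.unique_path y).choose_spec.1

lemma pth_eq {l : List T.carrier} {y : T.carrier} (h : T.IsPath l y) : l = T.pth y :=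
  (T.unique_path y).choose_spec.2 l h

lemma pth_ne_nil (y : T.carrier) : T.pth y ≠ [] := by
  intro h
  have := (pth_spec y).2.2
  rw [h] at this
  simp at this

lemma pth_getLast (y : T.carrier) : (T.pth y).getLast (pth_ne_nil y) = y := by
  have := (pth_spec y).2.2
  rwa [List.getLast?_eq_getLast (pth_ne_nil y), Option.some_inj] at this

lemma self_mem_pth (y : T.carrier) : y ∈ T.pth y := by
  have h := List.getLast_mem (pth_ne_nil y)
  rwa [pth_getLast y] at h

lemma isPath_root : T.IsPath [T.root] T.root := by
  refine ⟨List.isChain_singleton _, rfl, rfl⟩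

lemma pth_root : T.pth T.root = [T.root] := (pth_eq isPath_root).symm

lemma isPath_snoc {l : List T.carrier} {p y : T.carrier} (h : T.IsPath l p)
    (hc : T.child p y) : T.IsPath (l ++ [y]) y := by
  have hln : l ≠ [] := by rintro rfl; simpa using h.2.1
  refine ⟨?_, ?_, ?_⟩
  · unfold List.Chain'; rw [List.isChain_append]
    refine ⟨h.1, List.isChain_singleton _, ?_⟩
    intro a ha b hb
    rw [h.2.2] at ha
    simp only [List.head?_cons, Option.some_inj] at hb
    cases ha; cases hb; exact hc
  · rw [List.head?_append, h.2.1]; rfl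
  · rw [List.getLast?_append]; rfl

lemma pth_child {p y : T.carrier} (hc : T.child p y) : T.pth y = T.pth p ++ [y] :=
  (pth_eq (isPath_snoc (pth_spec p) hc)).symm

lemma not_child_root {p : T.carrier} : ¬ T.child p T.root := by
  intro h
  have h1 := pth_child h
  rw [pth_root] at h1
  have h2 := congrArg List.length h1
  simp only [List.length_append, List.length_cons, List.length_nil] at h2
  have h3 : (T.pth p).length = 0 := by omega
  exact pth_ne_nil p (List.eq_nil_of_length_eq_zero h3)

lemma parent_unique {p p' y : T.carrier} (h : T.child p y) (h' : T.child p' y) : p = p' := by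
  have h1 := pth_child h
  have h2 := pth_child h'
  have : T.pth p = T.pth p' := by
    have := h1.symm.trans h2
    exact List.append_inj_left' this rfl
  have e1 := pth_getLast p
  have e2 := pth_getLast p'
  rw [← e1, ← e2]
  congr 1

private lemma chain'_last_aux {α : Type} {R : α → α → Prop} :
    ∀ (l : List α) (a y : α), List.Chain' R (a :: l) →
      (a :: l).getLast (by simp) = y → l ≠ [] → ∃ p, R p y := by
  intro l
  induction l with
  | nil => intro a y _ _ h; exact absurd rfl h
  | cons b t ih =>
    intro a y hc hl _
    unfold List.Chain' at hc; rw [List.isChain_cons_cons] at hc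
    rcases eq_or_ne t [] with rfl | ht
    · refine ⟨a, ?_⟩
      have : y = b := by simpa using hl.symm
      rw [this]; exact hc.1
    · refine ih b y hc.2 ?_ ht
      rw [← hl]
      exact (List.getLast_cons (by simp)).symm

lemma exists_parent {y : T.carrier} (hy : y ≠ T.root) : ∃ p, T.child p y := by
  have hs := pth_spec y
  obtain ⟨a, l, hl⟩ : ∃ a l, T.pth y = a :: l := by
    cases h : T.pth y with
    | nil => exact absurd h (pth_ne_nil y)
    | cons a l => exact ⟨a, l, rfl⟩
  have ha : a = T.root := by
    have := hs.2.1; rw [hl] at this; simpa using this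
  have hlast : (a :: l).getLast (by simp) = y := by
    have h2 := hs.2.2
    rw [hl, List.getLast?_eq_getLast (by simp)] at h2
    exact Option.some_inj.1 h2
  have hln : l ≠ [] := by
    rintro rfl
    simp only [List.getLast_singleton] at hlast
    exact hy (by rw [← hlast, ha])
  have hch : List.Chain' T.child (a :: l) := by
    have := hs.1; rwa [hl] at this
  exact chain'_last_aux l a y hch hlast hln

end BinTree

end PathLemmas
section EmbLemmas

namespace ITree

variable {I : Type} {X Y : ITree I} (e : Emb X Y)

lemma Emb.isPath_map {l : List X.carrier} {y : X.carrier} (h : X.IsPath l y) :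
    Y.IsPath (l.map e.toFun) (e.toFun y) := by
  refine ⟨?_, ?_, ?_⟩
  · unfold List.Chain'; rw [List.isChain_map]
    exact List.IsChain.imp (fun ⦃a b⦄ hab => (e.map_child a b).1 hab) h.1
  · rw [List.head?_map, h.2.1, Option.map_some, e.map_root]
  · rw [List.getLast?_map, h.2.2, Option.map_some]

lemma Emb.pth_map (y : X.carrier) :
    Y.pth (e.toFun y) = (X.pth y).map e.toFun :=
  (BinTree.pth_eq (e.isPath_map (BinTree.pth_spec y))).symm

/-- Images of embeddings are closed under ancestors. -/
lemma Emb.mem_range_of_mem_pth {a : Y.carrier} {y : X.carrier}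
    (h : a ∈ Y.pth (e.toFun y)) : a ∈ Set.range e.toFun := by
  rw [e.pth_map, List.mem_map] at h
  obtain ⟨b, _, rfl⟩ := h
  exact ⟨b, rfl⟩

lemma pair_eq_of_mem {α : Type} {a b c d : α} (hab : a ≠ b)
    (ha : a ∈ ({c, d} : Set α)) (hb : b ∈ ({c, d} : Set α)) :
    ({c, d} : Set α) = {a, b} := by
  rcases ha with rfl | rfl <;> rcases hb with rfl | rfl
  · exact absurd rfl hab
  · rfl
  · exact Set.pair_comm _ _
  · exact absurd rfl hab

/-- The children of the image of a node with children `a ≠ b` are exactly the images. -/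
lemma Emb.children_map {x a b : X.carrier} (ha : X.child x a) (hb : X.child x b)
    (hab : a ≠ b) :
    {c | Y.child (e.toFun x) c} = {e.toFun a, e.toFun b} := by
  have ha' : Y.child (e.toFun x) (e.toFun a) := (e.map_child x a).1 ha
  have hb' : Y.child (e.toFun x) (e.toFun b) := (e.map_child x b).1 hb
  rcases Y.children_empty_or_pair (e.toFun x) with h | ⟨c, d, hcd, h⟩
  · exfalso
    have : e.toFun a ∈ {c | Y.child (e.toFun x) c} := ha'
    rw [h] at this
    exact this
  · rw [h]
    exact pair_eq_of_mem (fun hh => hab (e.inj hh)) (h ▸ ha') (h ▸ hb')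

/-- If a node in the image has a child in the image, all its children are in the image. -/
lemma Emb.child_mem_range {z c c' : Y.carrier} (hz : z ∈ Set.range e.toFun)
    (hc : c ∈ Set.range e.toFun) (h1 : Y.child z c) (h2 : Y.child z c') :
    c' ∈ Set.range e.toFun := by
  obtain ⟨x, rfl⟩ := hz
  obtain ⟨yc, rfl⟩ := hc
  have hxc : X.child x yc := (e.map_child x yc).2 h1
  rcases X.children_empty_or_pair x with h | ⟨a, b, hab, h⟩
  · exfalso
    have : yc ∈ {y | X.child x y} := hxc
    rw [h] at this
    exact this
  · have hxa : X.child x a := by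
      have : a ∈ {y | X.child x y} := by rw [h]; exact Set.mem_insert a _
      exact this
    have hxb : X.child x b := by
      have : b ∈ {y | X.child x y} := by rw [h]; exact Set.mem_insert_of_mem a rfl
      exact this
    have := e.children_map hxa hxb hab
    have hc' : c' ∈ {c | Y.child (e.toFun x) c} := h2
    rw [this] at hc'
    rcases hc' with rfl | rfl
    · exact ⟨a, rfl⟩
    · exact ⟨b, rfl⟩

end ITree

namespace BinTree

variable {T : BinTree}

/-- The root path to the `n`-th element of a branch. -/
lemma pth_branch (b : T.Branch) (n : ℕ) :
    T.pth (b.1 n) = (List.range (n + 1)).map b.1 := by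
  induction n with
  | zero =>
    rw [show b.1 0 = T.root from b.2.1, pth_root]
    simp only [List.range_succ, List.range_zero, List.nil_append, List.map_cons, List.map_nil]
    rw [show b.1 0 = T.root from b.2.1]
  | succ n ih =>
    rw [pth_child (b.2.2 n), ih]
    simp [List.range_succ]

lemma branch_eq_of_le {b c : T.Branch} {n : ℕ} (h : b.1 n = c.1 n) :
    ∀ k, k ≤ n → b.1 k = c.1 k := by
  intro k hk
  have h1 := pth_branch b n
  have h2 := pth_branch c n
  rw [h, h2] at h1
  have hk1 : k < n + 1 := by omega
  have hkb : k < ((List.range (n+1)).map b.1).length := by simpa using hk1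
  calc b.1 k = ((List.range (n+1)).map b.1)[k]'hkb := by simp
    _ = ((List.range (n+1)).map c.1)[k]'(by simpa using hk1) := List.getElem_of_eq h1.symm hkb
    _ = c.1 k := by simp

lemma branch_eq_of_tail {b c : T.Branch} {N : ℕ} (h : ∀ n, N ≤ n → b.1 n = c.1 n) :
    b = c := by
  apply Subtype.ext
  funext k
  exact branch_eq_of_le (h (max k N) (le_max_right _ _)) k (le_max_left _ _)

lemma branch_mem_pth (b : T.Branch) {k n : ℕ} (h : k ≤ n) : b.1 k ∈ T.pth (b.1 n) := by
  rw [pth_branch]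
  exact List.mem_map_of_mem (List.mem_range.2 (by omega))

end BinTree

end EmbLemmas
section Pullback

open Classical in
lemma snoc_path {α : Type} {R : α → α → Prop} {r : α} {l : List α} {p y : α}
    (h1 : l.Chain' R) (h2 : l.head? = some r) (h3 : l.getLast? = some p) (hc : R p y) :
    (l ++ [y]).Chain' R ∧ (l ++ [y]).head? = some r ∧ (l ++ [y]).getLast? = some y := by
  have hln : l ≠ [] := by rintro rfl; simp at h2
  refine ⟨?_, ?_, ?_⟩
  · unfold List.Chain'; rw [List.isChain_append]
    refine ⟨h1, List.isChain_singleton _, ?_⟩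
    intro a ha b hb
    rw [h3] at ha
    simp only [List.head?_cons, Option.some_inj] at hb
    cases ha; cases hb; exact hc
  · rw [List.head?_append, h2]; rfl
  · rw [List.getLast?_append]; rfl

namespace ITree

variable {I : Type} {X Y Z : ITree I} (f : Emb X Z) (g : Emb Y Z)

/-- Carrier of the concrete pullback. -/
def pbC : Type := {p : X.carrier × Y.carrier // f.toFun p.1 = g.toFun p.2}

def pbRoot : pbC f g := ⟨(X.root, Y.root), by rw [f.map_root, g.map_root]⟩

def pbChild (a b : pbC f g) : Prop := X.child a.1.1 b.1.1

lemma pbFst_inj : Function.Injective (fun w : pbC f g => w.1.1) := by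
  rintro ⟨⟨x, y⟩, h⟩ ⟨⟨x', y'⟩, h'⟩ he
  simp only at he
  subst he
  have : y = y' := g.inj (h.symm.trans h')
  subst this
  rfl

lemma pb_root_of_fst {w : pbC f g} (h : w.1.1 = X.root) : w = pbRoot f g :=
  pbFst_inj f g h

lemma pbChild_iffY (a b : pbC f g) : pbChild f g a b ↔ Y.child a.1.2 b.1.2 := by
  rw [pbChild, f.map_child, a.2, b.2, ← g.map_child]

lemma pb_snd_ne_root {w : pbC f g} (h : w.1.1 ≠ X.root) : w.1.2 ≠ Y.root := by
  intro hy
  apply h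
  apply f.inj
  rw [w.2, hy, g.map_root, f.map_root]

/-- Parent step for the pullback. -/
lemma pb_parent {w : pbC f g} (h : w.1.1 ≠ X.root) :
    ∃ wp : pbC f g, pbChild f g wp w := by
  obtain ⟨p, hp⟩ := BinTree.exists_parent h
  obtain ⟨q, hq⟩ := BinTree.exists_parent (pb_snd_ne_root f g h)
  have hfp : Z.child (f.toFun p) (f.toFun w.1.1) := (f.map_child _ _).1 hp
  have hgq : Z.child (g.toFun q) (g.toFun w.1.2) := (g.map_child _ _).1 hq
  rw [← w.2] at hgq
  have : f.toFun p = g.toFun q := BinTree.parent_unique hfp hgq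
  exact ⟨⟨(p, q), this⟩, hp⟩

lemma pb_exists_path (w : pbC f g) :
    ∃ l : List (pbC f g), l.Chain' (pbChild f g) ∧
      l.head? = some (pbRoot f g) ∧ l.getLast? = some w := by
  generalize hn : (X.pth w.1.1).length = n
  induction n using Nat.strong_induction_on generalizing w with
  | _ n ih =>
    by_cases hr : w.1.1 = X.root
    · have : w = pbRoot f g := pb_root_of_fst f g hr
      subst this
      exact ⟨[pbRoot f g], List.isChain_singleton _, rfl, rfl⟩
    · obtain ⟨wp, hwp⟩ := pb_parent f g hr
      have hlen : (X.pth wp.1.1).length < n := by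
        rw [← hn, BinTree.pth_child hwp]
        simp
      obtain ⟨l, h1, h2, h3⟩ := ih _ hlen wp rfl
      exact ⟨l ++ [w], snoc_path h1 h2 h3 hwp⟩

lemma pb_unique_path (w : pbC f g) :
    ∃! l : List (pbC f g), l.Chain' (pbChild f g) ∧
      l.head? = some (pbRoot f g) ∧ l.getLast? = some w := by
  obtain ⟨l, hl⟩ := pb_exists_path f g w
  refine ⟨l, hl, ?_⟩
  intro l' hl'
  have key : ∀ m : List (pbC f g), m.Chain' (pbChild f g) →
      m.head? = some (pbRoot f g) → m.getLast? = some w →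
      m.map (fun w => w.1.1) = X.pth w.1.1 := by
    intro m h1 h2 h3
    apply BinTree.pth_eq
    refine ⟨?_, ?_, ?_⟩
    · exact (List.isChain_map _).2 h1
    · rw [List.head?_map, h2]; rfl
    · rw [List.getLast?_map, h3]; rfl
  have := (key l' hl'.1 hl'.2.1 hl'.2.2).trans (key l hl.1 hl.2.1 hl.2.2).symm
  exact List.map_injective_iff.2 (pbFst_inj f g) this

/-- The children of a pullback node. -/
lemma pb_children (w : pbC f g) :
    {c | pbChild f g w c} = (∅ : Set (pbC f g)) ∨
    ∃ a b : pbC f g, a ≠ b ∧ {c | pbChild f g w c} = {a, b} := by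
  obtain ⟨⟨x, y⟩, hw⟩ := w
  rcases X.children_empty_or_pair x with hX0 | ⟨a, b, hab, hXp⟩
  · left
    ext c
    simp only [Set.mem_setOf_eq, Set.mem_empty_iff_false, iff_false]
    intro hc
    have : c.1.1 ∈ {y | X.child x y} := hc
    rw [hX0] at this
    exact this
  · rcases Y.children_empty_or_pair y with hY0 | ⟨c, d, hcd, hYp⟩
    · left
      ext e
      simp only [Set.mem_setOf_eq, Set.mem_empty_iff_false, iff_false]
      intro he
      have : e.1.2 ∈ {z | Y.child y z} := (pbChild_iffY f g _ _).1 he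
      rw [hY0] at this
      exact this
    · right
      have hxa : X.child x a := by
        have : a ∈ {y | X.child x y} := by rw [hXp]; exact Set.mem_insert a _
        exact this
      have hxb : X.child x b := by
        have : b ∈ {y | X.child x y} := by rw [hXp]; exact Set.mem_insert_of_mem a rfl
        exact this
      have hyc : Y.child y c := by
        have : c ∈ {z | Y.child y z} := by rw [hYp]; exact Set.mem_insert c _
        exact this
      have hyd : Y.child y d := by
        have : d ∈ {z | Y.child y z} := by rw [hYp]; exact Set.mem_insert_of_mem c rfl
        exact this
      have hZeq : ({f.toFun a, f.toFun b} : Set Z.carrier) = {g.toFun c, g.toFun d} := by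
        rw [← f.children_map hxa hxb hab, hw, g.children_map hyc hyd hcd]
      have hfa : f.toFun a ∈ ({g.toFun c, g.toFun d} : Set Z.carrier) := by
        rw [← hZeq]; exact Set.mem_insert _ _
      have hfb : f.toFun b ∈ ({g.toFun c, g.toFun d} : Set Z.carrier) := by
        rw [← hZeq]; exact Set.mem_insert_of_mem _ rfl
      -- match up children
      have main : ∀ c' d' : Y.carrier, c' ≠ d' → Y.child y c' → Y.child y d' →
          f.toFun a = g.toFun c' → f.toFun b = g.toFun d' →
          ∃ a' b' : pbC f g, a' ≠ b' ∧
            {e | pbChild f g ⟨(x, y), hw⟩ e} = {a', b'} := by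
        intro c' d' hcd' hyc' hyd' h1 h2
        refine ⟨⟨(a, c'), h1⟩, ⟨(b, d'), h2⟩, ?_, ?_⟩
        · intro hh
          apply hab
          exact congrArg (fun w : pbC f g => w.1.1) hh
        · ext ⟨⟨m, n⟩, hmn⟩
          show X.child x m ↔ _ = _ ∨ _ = _
          constructor
          · intro hc
            have hm : m ∈ {y | X.child x y} := hc
            rw [hXp] at hm
            rcases hm with rfl | rfl
            · left
              have hn : n = c' := g.inj (hmn.symm.trans h1)
              subst hn
              rfl
            · right
              have hn : n = d' := g.inj (hmn.symm.trans h2)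
              subst hn
              rfl
          · rintro (hh | hh) <;>
            · have := congrArg (fun w : pbC f g => w.1.1) hh
              simp only at this
              subst this
              first
                | exact hxa
                | exact hxb
      rcases hfa with h1 | h1
      · rcases hfb with h2 | h2
        · exfalso; exact hab (f.inj (h1.trans h2.symm))
        · exact main c d hcd hyc hyd h1 h2
      · rcases hfb with h2 | h2
        · exact main d c (Ne.symm hcd) hyd hyc h1 h2
        · exfalso; exact hab (f.inj (h1.trans h2.symm))

/-- The pullback binary tree. -/
noncomputable def pbTree : BinTree where
  carrier := pbC f g
  root := pbRoot f g
  child := pbChild f g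
  children_empty_or_pair := pb_children f g
  unique_path := pb_unique_path f g

/-- First projection of a pullback branch. -/
def pbBranchX (b : (pbTree f g).Branch) : X.toBinTree.Branch :=
  ⟨fun n => (b.1 n).1.1, congrArg (fun w : pbC f g => w.1.1) b.2.1, fun n => b.2.2 n⟩

/-- Second projection of a pullback branch. -/
def pbBranchY (b : (pbTree f g).Branch) : Y.toBinTree.Branch :=
  ⟨fun n => (b.1 n).1.2, congrArg (fun w : pbC f g => w.1.2) b.2.1,
    fun n => (pbChild_iffY f g _ _).1 (b.2.2 n)⟩

/-- The pullback `I`-tree. -/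
noncomputable def pbITree : ITree I where
  toBinTree := pbTree f g
  label := fun b => X.label (pbBranchX f g b)

/-- First projection embedding. -/
noncomputable def pbFstE : Emb (pbITree f g) X where
  toFun w := w.1.1
  inj := pbFst_inj f g
  map_root := rfl
  map_child _ _ := Iff.rfl
  map_label := by
    intro b c hbc i hi
    have : c = pbBranchX f g b := Subtype.ext (funext fun n => hbc n)
    rw [this]
    exact hi

/-- Second projection embedding. -/
noncomputable def pbSndE (hY : ∀ b, (Y.label b).isSome) : Emb (pbITree f g) Y where
  toFun w := w.1.2
  inj := by
    rintro ⟨⟨x, y⟩, h⟩ ⟨⟨x', y'⟩, h'⟩ he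
    simp only at he
    subst he
    have : x = x' := f.inj (h.trans h'.symm)
    subst this
    rfl
  map_root := rfl
  map_child a b := pbChild_iffY f g a b
  map_label := by
    intro b c hbc i hi
    have hc : c = pbBranchY f g b := Subtype.ext (funext fun n => hbc n)
    subst hc
    -- labels in Z agree
    have hZ1 : Z.label (f.mapBranch (pbBranchX f g b)) = some i :=
      f.map_label _ _ (fun _ => rfl) i hi
    obtain ⟨j, hj⟩ : ∃ j, Y.label (pbBranchY f g b) = some j := by
      have := hY (pbBranchY f g b)
      exact ⟨_, Option.eq_some_of_isSome this⟩
    have hZ2 : Z.label (g.mapBranch (pbBranchY f g b)) = some j :=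
      g.map_label _ _ (fun _ => rfl) j hj
    have heq : f.mapBranch (pbBranchX f g b) = g.mapBranch (pbBranchY f g b) :=
      Subtype.ext (funext fun n => (b.1 n).2)
    rw [heq, hZ2] at hZ1
    rw [hj]
    exact hZ1

end ITree

end Pullback
section PBFinitary

namespace ITree

open Classical

variable {I : Type} {X Y Z : ITree I} (f : Emb X Z) (g : Emb Y Z)

/-- Downward closure of "lifting to the pullback" along a branch. -/
lemma pb_lift_downclosed (β : X.toBinTree.Branch) {k m : ℕ} (hm : m ≤ k)
    (hk : f.toFun (β.1 k) ∈ Set.range g.toFun) :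
    f.toFun (β.1 m) ∈ Set.range g.toFun := by
  obtain ⟨y, hy⟩ := hk
  have h1 : β.1 m ∈ X.pth (β.1 k) := BinTree.branch_mem_pth β hm
  have h2 : f.toFun (β.1 m) ∈ Z.pth (f.toFun (β.1 k)) := by
    rw [f.pth_map]
    exact List.mem_map_of_mem h1
  rw [← hy] at h2
  exact g.mem_range_of_mem_pth h2

/-- If an entire branch lifts, it gives a branch of the pullback, hence every node on
it is on a pullback branch. -/
lemma pb_onBranch_of_lift (β : X.toBinTree.Branch)
    (hβ : ∀ n, f.toFun (β.1 n) ∈ Set.range g.toFun) (k : ℕ) {w : pbC f g}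
    (hw : w.1.1 = β.1 k) : (pbTree f g).OnBranch w := by
  choose ys hys using hβ
  have hbr : (pbTree f g).IsBranch (fun n => (⟨(β.1 n, ys n), (hys n).symm⟩ : pbC f g)) := by
    constructor
    · apply pb_root_of_fst f g
      exact β.2.1
    · intro n
      exact β.2.2 n
  refine ⟨⟨_, hbr⟩, k, ?_⟩
  apply pbFst_inj f g
  exact hw.symm

/-- The finite set of branch nodes of `X` on branches that do not entirely lift. -/
lemma pb_P_finite (hX : Finite X.toBinTree.Branch) :
    Set.Finite {p : X.carrier | ∃ (β : X.toBinTree.Branch) (k : ℕ), β.1 k = p ∧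
      f.toFun (β.1 k) ∈ Set.range g.toFun ∧ ∃ n, f.toFun (β.1 n) ∉ Set.range g.toFun} := by
  have : {p : X.carrier | ∃ (β : X.toBinTree.Branch) (k : ℕ), β.1 k = p ∧
      f.toFun (β.1 k) ∈ Set.range g.toFun ∧ ∃ n, f.toFun (β.1 n) ∉ Set.range g.toFun} ⊆
      ⋃ (β : X.toBinTree.Branch), β.1 '' (Set.Iio (if h : ∃ n, f.toFun (β.1 n) ∉
        Set.range g.toFun then Nat.find h else 0)) := by
    rintro p ⟨β, k, rfl, hk, hn⟩
    apply Set.mem_iUnion.2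
    refine ⟨β, k, ?_, rfl⟩
    rw [dif_pos hn]
    simp only [Set.mem_Iio]
    by_contra hh
    push_neg at hh
    exact Nat.find_spec hn (pb_lift_downclosed f g β hh hk)
  apply Set.Finite.subset _ this
  exact Set.finite_iUnion (fun β => (Set.finite_Iio _).image _)

/-- Children of a finite set form a finite set. -/
lemma children_finite {T : ITree I} {P : Set T.carrier} (hP : P.Finite) :
    Set.Finite {x : T.carrier | ∃ p ∈ P, T.child p x} := by
  have : {x : T.carrier | ∃ p ∈ P, T.child p x} ⊆ ⋃ p ∈ P, {x | T.child p x} := by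
    rintro x ⟨p, hp, hc⟩
    exact Set.mem_biUnion hp hc
  apply Set.Finite.subset _ this
  apply Set.Finite.biUnion hP
  intro p _
  rcases T.children_empty_or_pair p with h | ⟨a, b, _, h⟩
  · rw [h]; exact Set.finite_empty
  · rw [h]; exact (Set.finite_singleton b).insert a

/-- The pullback of finitary trees is finitary. -/
lemma pb_finitary (hX : Finitary X) (hY : Finitary Y) :
    Finitary (pbITree f g) := by
  obtain ⟨hXb, hXd, hXl⟩ := hX
  refine ⟨?_, ?_, ?_⟩
  · -- finitely many branches
    have : Function.Injective (pbBranchX f g) := by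
      intro b b' h
      apply Subtype.ext
      funext n
      apply pbFst_inj f g
      exact congrFun (congrArg Subtype.val h) n
    exact Finite.of_injective _ this
  · -- finitely many nodes whose parent is on no branch
    set DX : Set X.carrier :=
      {x | ¬ ∃ p, X.child p x ∧ X.toBinTree.OnBranch p} with hDX
    have hDXfin : DX.Finite := @Set.toFinite _ _ hXd
    set P : Set X.carrier := {p : X.carrier | ∃ (β : X.toBinTree.Branch) (k : ℕ),
      β.1 k = p ∧ f.toFun (β.1 k) ∈ Set.range g.toFun ∧
      ∃ n, f.toFun (β.1 n) ∉ Set.range g.toFun} with hP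
    have hPfin := pb_P_finite f g hXb
    have hChfin : Set.Finite {x : X.carrier | ∃ p ∈ P, X.child p x} :=
      children_finite hPfin
    have hsub : {w : pbC f g | ¬ ∃ p, pbChild f g p w ∧ (pbTree f g).OnBranch p} ⊆
        {pbRoot f g} ∪ (fun w : pbC f g => w.1.1) ⁻¹' DX ∪
        (fun w : pbC f g => w.1.1) ⁻¹' {x : X.carrier | ∃ p ∈ P, X.child p x} := by
      intro w hw
      by_cases hr : w.1.1 = X.root
      · exact Or.inl (Or.inl (pb_root_of_fst f g hr))
      · obtain ⟨p, hp⟩ := BinTree.exists_parent hr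
        obtain ⟨q, hq⟩ := BinTree.exists_parent (pb_snd_ne_root f g hr)
        have hfp : Z.child (f.toFun p) (f.toFun w.1.1) := (f.map_child _ _).1 hp
        have hgq : Z.child (g.toFun q) (g.toFun w.1.2) := (g.map_child _ _).1 hq
        rw [← w.2] at hgq
        have hpq : f.toFun p = g.toFun q := BinTree.parent_unique hfp hgq
        set wp : pbC f g := ⟨(p, q), hpq⟩ with hwp
        have hnob : ¬ (pbTree f g).OnBranch wp := by
          intro hob
          exact hw ⟨wp, hp, hob⟩
        by_cases hpb : X.toBinTree.OnBranch p
        · -- parent on an X-branch: w projects into children of P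
          obtain ⟨β, k, hβk⟩ := hpb
          right
          refine ⟨p, ?_, hp⟩
          refine ⟨β, k, hβk, ?_, ?_⟩
          · rw [hβk]; exact ⟨q, hpq.symm⟩
          · by_contra hall
            push_neg at hall
            exact hnob (pb_onBranch_of_lift f g β hall k hβk.symm)
        · -- parent on no X-branch
          left; right
          intro ⟨p', hp', hob'⟩
          exact hpb (BinTree.parent_unique hp' hp ▸ hob')
    have : Set.Finite {w : pbC f g | ¬ ∃ p, pbChild f g p w ∧ (pbTree f g).OnBranch p} := by
      apply Set.Finite.subset _ hsub
      apply Set.Finite.union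
      apply Set.Finite.union
      · exact Set.finite_singleton _
      · exact Set.Finite.preimage (Set.injOn_of_injective (pbFst_inj f g)) hDXfin
      · exact Set.Finite.preimage (Set.injOn_of_injective (pbFst_inj f g)) hChfin
    exact this.to_subtype
  · -- labels are total
    intro b
    exact hXl (pbBranchX f g b)

end ITree

end PBFinitary
section ConeSection

open CategoryTheory Limits

namespace ITree

variable {I : Type}

lemma comp_toFun {X Y Z : FinITree I} (f : X ⟶ Y) (g : Y ⟶ Z) :
    (f ≫ g).hom.toFun = g.hom.toFun ∘ f.hom.toFun := rfl

variable {FX FY FZ : FinITree I} (f : FX ⟶ FZ) (g : FY ⟶ FZ)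

/-- The pullback object in `FinITree I`. -/
noncomputable def pbObj : FinITree I :=
  ⟨pbITree f.hom g.hom, pb_finitary f.hom g.hom FX.property FY.property⟩

noncomputable def pbFst : pbObj f g ⟶ FX := ⟨pbFstE f.hom g.hom⟩

noncomputable def pbSnd : pbObj f g ⟶ FY := ⟨pbSndE f.hom g.hom FY.property.2.2⟩

lemma pb_comm : pbFst f g ≫ f = pbSnd f g ≫ g := by
  refine ObjectProperty.hom_ext _ (Emb.ext' ?_)
  funext w
  exact w.2

/-- The pullback cone. -/
noncomputable def pbCone : PullbackCone f g :=
  PullbackCone.mk (pbFst f g) (pbSnd f g) (pb_comm f g)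

/-- The lift of a cone to the pullback. -/
noncomputable def pbLift (s : PullbackCone f g) : s.pt ⟶ pbObj f g := ⟨{
  toFun := fun a => ⟨(s.fst.hom.toFun a, s.snd.hom.toFun a),
    congrFun (congrArg (fun h => h.hom.toFun) s.condition) a⟩
  inj := by
    intro a b h
    exact s.fst.hom.inj (congrArg (fun w : pbC f.hom g.hom => w.1.1) h)
  map_root := by
    apply Subtype.ext
    show (s.fst.hom.toFun _, s.snd.hom.toFun _) = (FX.obj.root, FY.obj.root)
    rw [s.fst.hom.map_root, s.snd.hom.map_root]
  map_child := fun a b => by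
    constructor
    · intro h; exact (s.fst.hom.map_child a b).1 h
    · intro h; exact (s.fst.hom.map_child a b).2 h
  map_label := by
    intro b c hbc i hi
    show FX.obj.label (pbBranchX f.hom g.hom c) = some i
    have : pbBranchX f.hom g.hom c = s.fst.hom.mapBranch b := by
      apply Subtype.ext
      funext n
      show (c.1 n).1.1 = s.fst.hom.toFun (b.1 n)
      rw [hbc n]
    rw [this]
    exact s.fst.hom.map_label b _ (fun _ => rfl) i hi }⟩

lemma pbLift_fst (s : PullbackCone f g) : pbLift f g s ≫ pbFst f g = s.fst :=
  ObjectProperty.hom_ext _ (Emb.ext' rfl)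

lemma pbLift_snd (s : PullbackCone f g) : pbLift f g s ≫ pbSnd f g = s.snd :=
  ObjectProperty.hom_ext _ (Emb.ext' rfl)

/-- The pullback cone is a limit. -/
noncomputable def pbIsLimit : IsLimit (pbCone f g) := by
  apply PullbackCone.IsLimit.mk (pb_comm f g) (pbLift f g) (pbLift_fst f g) (pbLift_snd f g)
  intro s m h1 h2
  refine ObjectProperty.hom_ext _ (Emb.ext' ?_)
  funext a
  apply Subtype.ext
  apply Prod.ext
  · show (m.hom.toFun a).1.1 = s.fst.hom.toFun a
    rw [← h1]; rfl
  · show (m.hom.toFun a).1.2 = s.snd.hom.toFun a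
    rw [← h2]; rfl

theorem finITree_hasPullbacks : HasPullbacks (FinITree I) := by
  constructor
  intro F
  haveI : HasLimit (cospan (F.map WalkingCospan.Hom.inl) (F.map WalkingCospan.Hom.inr)) :=
    HasLimit.mk ⟨_, pbIsLimit _ _⟩
  apply hasLimit_of_iso (diagramIsoCospan F).symm

end ITree

end ConeSection
section Amalg

namespace ITree

variable {I : Type} {X Y Z A : ITree I} (f : Emb X Z) (g : Emb Y Z) (u v : Emb Z A)

/-- A node is `v`-colored if one of its ancestors (or itself) lies in the image of `g`
but not of `f`. -/
def VCol (z : Z.carrier) : Prop :=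
  ∃ a ∈ Z.pth z, a ∈ Set.range g.toFun \ Set.range f.toFun

lemma not_vcol_root : ¬ VCol f g Z.root := by
  rintro ⟨a, ha, _, hnf⟩
  rw [BinTree.pth_root] at ha
  simp only [List.mem_singleton] at ha
  subst ha
  exact hnf ⟨X.root, f.map_root⟩

lemma vcol_mono {z z' : Z.carrier} (hc : Z.child z z') (h : VCol f g z) : VCol f g z' := by
  obtain ⟨a, ha, h2⟩ := h
  refine ⟨a, ?_, h2⟩
  rw [BinTree.pth_child hc]
  exact List.mem_append_left _ ha

lemma not_vcol_of_range_f {x : X.carrier} : ¬ VCol f g (f.toFun x) := by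
  rintro ⟨a, ha, _, hnf⟩
  exact hnf (f.mem_range_of_mem_pth ha)

/-- At a color switch along an edge, the child is in `G \ F` and the parent in `F ∩ G`. -/
lemma vcol_switch {z z' : Z.carrier} (hc : Z.child z z') (h' : VCol f g z')
    (h : ¬ VCol f g z) :
    z' ∈ Set.range g.toFun \ Set.range f.toFun ∧
      z ∈ Set.range f.toFun ∩ Set.range g.toFun := by
  obtain ⟨a, ha, h2⟩ := h'
  rw [BinTree.pth_child hc] at ha
  rcases List.mem_append.1 ha with ha | ha
  · exact absurd ⟨a, ha, h2⟩ h
  · simp only [List.mem_singleton] at ha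
    subst ha
    have hzG : z ∈ Set.range g.toFun := by
      obtain ⟨y', hy'⟩ := h2.1
      have hz : z ∈ Z.pth a := by
        rw [BinTree.pth_child hc]
        exact List.mem_append_left _ (BinTree.self_mem_pth z)
      rw [← hy'] at hz
      exact g.mem_range_of_mem_pth hz
    refine ⟨h2, ?_, hzG⟩
    by_contra hzf
    exact h ⟨z, BinTree.self_mem_pth z, hzG, hzf⟩

variable (huv : ∀ z, z ∈ Set.range f.toFun ∩ Set.range g.toFun → u.toFun z = v.toFun z)

include huv in
/-- Key lemma: `u`-colored and `v`-colored nodes have different images. -/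
lemma amalg_no_mix : ∀ n (a b : Z.carrier), (Z.pth b).length = n →
    ¬ VCol f g a → VCol f g b → u.toFun a ≠ v.toFun b := by
  intro n
  induction n using Nat.strong_induction_on with
  | _ n ih =>
    intro a b hn hva hvb h
    have hbr : b ≠ Z.root := by rintro rfl; exact not_vcol_root f g hvb
    have har : a ≠ Z.root := by
      rintro rfl
      rw [u.map_root] at h
      have : b = Z.root := v.inj (by rw [v.map_root, ← h])
      exact hbr this
    obtain ⟨b0, hb0⟩ := BinTree.exists_parent hbr
    obtain ⟨a0, ha0⟩ := BinTree.exists_parent har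
    have hpar : u.toFun a0 = v.toFun b0 := by
      have h1 : A.child (u.toFun a0) (u.toFun a) := (u.map_child _ _).1 ha0
      have h2 : A.child (v.toFun b0) (v.toFun b) := (v.map_child _ _).1 hb0
      rw [← h] at h2
      exact BinTree.parent_unique h1 h2
    have hva0 : ¬ VCol f g a0 := fun hh => hva (vcol_mono f g ha0 hh)
    by_cases hvb0 : VCol f g b0
    · have hlen : (Z.pth b0).length < n := by
        rw [← hn, BinTree.pth_child hb0]
        simp
      exact ih _ hlen a0 b0 rfl hva0 hvb0 hpar
    · obtain ⟨hbGF, hb0FG⟩ := vcol_switch f g hb0 hvb hvb0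
      have hub0 : u.toFun b0 = v.toFun b0 := huv b0 hb0FG
      have ha0b0 : a0 = b0 := u.inj (hpar.trans hub0.symm)
      subst ha0b0
      -- a is a child of a0 = b0, and both children of b0 lie in the image of g
      have haG : a ∈ Set.range g.toFun :=
        g.child_mem_range hb0FG.2 hbGF.1 hb0 ha0
      have haF : a ∈ Set.range f.toFun := by
        by_contra hh
        exact hva ⟨a, BinTree.self_mem_pth a, haG, hh⟩
      have : u.toFun a = v.toFun a := huv a ⟨haF, haG⟩
      rw [this] at h
      have : a = b := v.inj h
      subst this
      exact hva hvb

open scoped Classical in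
/-- The amalgamated map. -/
noncomputable def amalgFun (z : Z.carrier) : A.carrier :=
  if VCol f g z then v.toFun z else u.toFun z

lemma amalgFun_of_vcol {z : Z.carrier} (h : VCol f g z) :
    amalgFun f g u v z = v.toFun z := by
  rw [amalgFun, if_pos h]

lemma amalgFun_of_not_vcol {z : Z.carrier} (h : ¬ VCol f g z) :
    amalgFun f g u v z = u.toFun z := by
  rw [amalgFun, if_neg h]

include huv in
lemma amalg_inj : Function.Injective (amalgFun f g u v) := by
  intro a b h
  by_cases hva : VCol f g a <;> by_cases hvb : VCol f g b
  · rw [amalgFun_of_vcol f g u v hva, amalgFun_of_vcol f g u v hvb] at h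
    exact v.inj h
  · rw [amalgFun_of_vcol f g u v hva, amalgFun_of_not_vcol f g u v hvb] at h
    exact absurd h.symm (amalg_no_mix f g u v huv _ b a rfl hvb hva)
  · rw [amalgFun_of_not_vcol f g u v hva, amalgFun_of_vcol f g u v hvb] at h
    exact absurd h (amalg_no_mix f g u v huv _ a b rfl hva hvb)
  · rw [amalgFun_of_not_vcol f g u v hva, amalgFun_of_not_vcol f g u v hvb] at h
    exact u.inj h

include huv in
lemma amalg_map_child (a b : Z.carrier) :
    Z.child a b ↔ A.child (amalgFun f g u v a) (amalgFun f g u v b) := by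
  constructor
  · intro hc
    by_cases hva : VCol f g a
    · have hvb : VCol f g b := vcol_mono f g hc hva
      rw [amalgFun_of_vcol f g u v hva, amalgFun_of_vcol f g u v hvb]
      exact (v.map_child _ _).1 hc
    · by_cases hvb : VCol f g b
      · obtain ⟨_, haFG⟩ := vcol_switch f g hc hvb hva
        rw [amalgFun_of_not_vcol f g u v hva, amalgFun_of_vcol f g u v hvb, huv a haFG]
        exact (v.map_child _ _).1 hc
      · rw [amalgFun_of_not_vcol f g u v hva, amalgFun_of_not_vcol f g u v hvb]
        exact (u.map_child _ _).1 hc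
  · intro hc
    by_cases hva : VCol f g a <;> by_cases hvb : VCol f g b
    · rw [amalgFun_of_vcol f g u v hva, amalgFun_of_vcol f g u v hvb] at hc
      exact (v.map_child _ _).2 hc
    · -- v-colored a, u-colored b : impossible
      exfalso
      rw [amalgFun_of_vcol f g u v hva, amalgFun_of_not_vcol f g u v hvb] at hc
      have hbr : b ≠ Z.root := by
        rintro rfl
        rw [u.map_root] at hc
        exact BinTree.not_child_root hc
      obtain ⟨b0, hb0⟩ := BinTree.exists_parent hbr
      have h2 : A.child (u.toFun b0) (u.toFun b) := (u.map_child _ _).1 hb0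
      have hpar : v.toFun a = u.toFun b0 := BinTree.parent_unique hc h2
      by_cases hvb0 : VCol f g b0
      · exact hvb (vcol_mono f g hb0 hvb0)
      · exact amalg_no_mix f g u v huv _ b0 a rfl hvb0 hva hpar.symm
    · -- u-colored a, v-colored b
      rw [amalgFun_of_not_vcol f g u v hva, amalgFun_of_vcol f g u v hvb] at hc
      have hbr : b ≠ Z.root := by
        rintro rfl
        rw [v.map_root] at hc
        exact BinTree.not_child_root hc
      obtain ⟨b0, hb0⟩ := BinTree.exists_parent hbr
      have h2 : A.child (v.toFun b0) (v.toFun b) := (v.map_child _ _).1 hb0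
      have hpar : u.toFun a = v.toFun b0 := BinTree.parent_unique hc h2
      by_cases hvb0 : VCol f g b0
      · exact absurd hpar (amalg_no_mix f g u v huv _ a b0 rfl hva hvb0)
      · obtain ⟨hbGF, hb0FG⟩ := vcol_switch f g hb0 hvb hvb0
        have : u.toFun b0 = v.toFun b0 := huv b0 hb0FG
        have hab0 : a = b0 := u.inj (hpar.trans this.symm)
        subst hab0
        exact hb0
    · rw [amalgFun_of_not_vcol f g u v hva, amalgFun_of_not_vcol f g u v hvb] at hc
      exact (u.map_child _ _).2 hc

include huv in
/-- The amalgamated embedding. -/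
noncomputable def amalgEmb : Emb Z A where
  toFun := amalgFun f g u v
  inj := amalg_inj f g u v huv
  map_root := by
    rw [amalgFun_of_not_vcol f g u v (not_vcol_root f g), u.map_root]
  map_child := amalg_map_child f g u v huv
  map_label := by
    intro b c hbc i hi
    by_cases hex : ∃ n, VCol f g (b.1 n)
    · obtain ⟨n0, hn0⟩ := hex
      have htail : ∀ n, n0 ≤ n → VCol f g (b.1 n) := by
        intro n hn
        induction n with
        | zero => exact Nat.le_zero.1 hn ▸ hn0
        | succ m ihm =>
          rcases Nat.lt_or_ge n0 (m + 1) with hlt | hge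
          · exact vcol_mono f g (b.2.2 m) (ihm (by omega))
          · have : n0 = m + 1 := by omega
            exact this ▸ hn0
      have hc : c = v.mapBranch b := by
        apply BinTree.branch_eq_of_tail (N := n0)
        intro n hn
        rw [hbc n, amalgFun_of_vcol f g u v (htail n hn)]
        rfl
      rw [hc]
      exact v.map_label b _ (fun _ => rfl) i hi
    · push_neg at hex
      have hc : c = u.mapBranch b := by
        apply Subtype.ext
        funext n
        rw [hbc n, amalgFun_of_not_vcol f g u v (hex n)]
        rfl
      rw [hc]
      exact u.map_label b _ (fun _ => rfl) i hi

lemma amalgEmb_comp_f (x : X.carrier) :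
    (amalgEmb f g u v huv).toFun (f.toFun x) = u.toFun (f.toFun x) :=
  amalgFun_of_not_vcol f g u v (not_vcol_of_range_f f g)

lemma amalgEmb_comp_g (y : Y.carrier) :
    (amalgEmb f g u v huv).toFun (g.toFun y) = v.toFun (g.toFun y) := by
  by_cases hv : VCol f g (g.toFun y)
  · exact amalgFun_of_vcol f g u v hv
  · have hG : g.toFun y ∈ Set.range g.toFun := ⟨y, rfl⟩
    have hF : g.toFun y ∈ Set.range f.toFun := by
      by_contra hh
      exact hv ⟨_, BinTree.self_mem_pth _, hG, hh⟩
    show amalgFun f g u v (g.toFun y) = v.toFun (g.toFun y)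
    rw [amalgFun_of_not_vcol f g u v hv]
    exact huv _ ⟨hF, hG⟩

end ITree

end Amalg
/-- STATEMENT 17: `T_I` has pullbacks, and for every pullback square and every pair of
embeddings `u, v : Z ⇉ A` agreeing on `X∩Y` there is a single embedding `w : Z → A`
agreeing with `u` on `X` and with `v` on `Y`; in particular `T_I` satisfies (C2'). -/
theorem stmt17 (I : Type) :
    HasPullbacks (FinITree I) ∧
    (∀ {W X Y Z : FinITree I} (fst : W ⟶ X) (snd : W ⟶ Y) (f : X ⟶ Z) (g : Y ⟶ Z),
      IsPullback fst snd f g →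
      ∀ {A : FinITree I} (u v : Z ⟶ A), (fst ≫ f) ≫ u = (fst ≫ f) ≫ v →
        ∃ w : Z ⟶ A, f ≫ w = f ≫ u ∧ g ≫ w = g ≫ v) ∧
    CondC2' (FinITree I) := by
  have amalg : ∀ {W X Y Z : FinITree I} (fst : W ⟶ X) (snd : W ⟶ Y) (f : X ⟶ Z) (g : Y ⟶ Z),
      IsPullback fst snd f g →
      ∀ {A : FinITree I} (u v : Z ⟶ A), (fst ≫ f) ≫ u = (fst ≫ f) ≫ v →
        ∃ w : Z ⟶ A, f ≫ w = f ≫ u ∧ g ≫ w = g ≫ v := by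
    intro W X Y Z fst snd f g hP A u v huv
    -- `u` and `v` agree on the intersection of the images
    have huv' : ∀ z, z ∈ Set.range (ITree.Emb.toFun f.hom) ∩ Set.range (ITree.Emb.toFun g.hom) →
        u.hom.toFun z = v.hom.toFun z := by
      have hcomm := ITree.pb_comm f g
      set l : ITree.pbObj f g ⟶ W := hP.lift (ITree.pbFst f g) (ITree.pbSnd f g) hcomm with hl
      have hlf : l ≫ fst = ITree.pbFst f g := hP.lift_fst _ _ _
      have huv2 : fst ≫ f ≫ u = fst ≫ f ≫ v := by
        simpa only [Category.assoc] using huv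
      have h1 : (ITree.pbFst f g ≫ f) ≫ u = (ITree.pbFst f g ≫ f) ≫ v := by
        rw [← hlf]
        simp only [Category.assoc]
        rw [huv2]
      rintro z ⟨⟨x, hx⟩, ⟨y, hy⟩⟩
      have hw : f.hom.toFun x = g.hom.toFun y := hx.trans hy.symm
      have := congrFun (congrArg (fun h => h.hom.toFun) h1) (⟨(x, y), hw⟩ : ITree.pbC f.hom g.hom)
      rw [← hx]
      exact this
    refine ⟨⟨ITree.amalgEmb f.hom g.hom u.hom v.hom huv'⟩, ?_, ?_⟩
    · refine ObjectProperty.hom_ext _ (ITree.Emb.ext' ?_)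
      funext x
      exact ITree.amalgEmb_comp_f f.hom g.hom u.hom v.hom huv' x
    · refine ObjectProperty.hom_ext _ (ITree.Emb.ext' ?_)
      funext y
      exact ITree.amalgEmb_comp_g f.hom g.hom u.hom v.hom huv' y
  refine ⟨ITree.finITree_hasPullbacks, amalg, ?_⟩
  intro W X Y Z fst snd f g hP A u v huv
  obtain ⟨w0, hwf, hwg⟩ := amalg fst snd f g hP u v huv
  refine ⟨A, 𝟙 A, 2, ![u, w0, v], by simp, by simp [Fin.last], ?_⟩
  intro i
  fin_cases i
  · left
    show f ≫ (![u, w0, v] : Fin 3 → _) 0 = f ≫ (![u, w0, v] : Fin 3 → _) 1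
    simpa using hwf.symm
  · right
    show g ≫ (![u, w0, v] : Fin 3 → _) 1 = g ≫ (![u, w0, v] : Fin 3 → _) 2
    simpa using hwg
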